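/- Let T₀ > 0 and let η : [0,T₀] × [0,T₀] → ℝ be measurable with η(s,·) ∈ L¹([0,T₀]) for a.e. s, such that (s,r,τ) ↦ |η(s,r)·η(s,τ)|·log(T₀/(r ∨ τ)) is Lebesgue integrable on [0,T₀]³ and ∫₀^{T₀}∫₀^{T₀} u·η(s,u)² du ds < ∞. Then (1/2)·∫₀^{T₀}∫₀^{T₀} g(s,u)² du ds ≤ (1/2)∫₀^{T₀}∫₀^{T₀} η(s,u) λ(s,u) log(T₀/u) du ds + ∫₀^{T₀}∫₀^{T₀} u·η(s,u)² du ds. -/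
import Mathlib


open MeasureTheory Real Set

set_option linter.unusedVariables false

lemma integral_one_div_Ioc {T₀ m : ℝ} (h0 : 0 < m) (hm : m ≤ T₀) :
    ∫ u in Ioc m T₀, (1:ℝ)/u = Real.log (T₀ / m) := by
  rw [← intervalIntegral.integral_of_le hm]
  refine integral_one_div ?_
  intro h
  rcases Set.mem_uIcc.mp h with ⟨h1, _⟩ | ⟨_, h2⟩ <;> linarith

lemma integrableOn_one_div_Ioc {T₀ m : ℝ} (h0 : 0 < m) :
    IntegrableOn (fun u : ℝ => 1/u) (Ioc m T₀) := by
  have : IntegrableOn (fun u : ℝ => 1/u) (Icc m T₀) := by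
    apply ContinuousOn.integrableOn_Icc
    apply ContinuousOn.div continuousOn_const continuousOn_id
    intro x hx
    exact ne_of_gt (lt_of_lt_of_le h0 hx.1)
  exact this.mono_set Ioc_subset_Icc_self

lemma indicator_integral_eq (T₀ : ℝ) (f : ℝ → ℝ) {u : ℝ} (hu : u ∈ Ioc 0 T₀) :
    ∫ t, (Iio u).indicator f t ∂(volume.restrict (Ioc 0 T₀)) = ∫ t in (0:ℝ)..u, f t := by
  rw [integral_indicator measurableSet_Iio, Measure.restrict_restrict measurableSet_Iio]
  have h : Iio u ∩ Ioc 0 T₀ = Ioo 0 u := by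
    ext x
    constructor
    · rintro ⟨h1, h2, _⟩; exact ⟨h2, h1⟩
    · rintro ⟨h1, h2⟩; exact ⟨h2, h1, le_trans h2.le hu.2⟩
  rw [h, ← integral_Ioc_eq_integral_Ioo, intervalIntegral.integral_of_le hu.1.le]

lemma per_f (T₀ : ℝ) (hT₀ : 0 < T₀) (f : ℝ → ℝ) (hf : Measurable f)
    (hfi : IntegrableOn f (Ioc 0 T₀))
    (habs : Integrable (fun p : ℝ × ℝ => |f p.1 * f p.2| * Real.log (T₀ / max p.1 p.2))
      ((volume.restrict (Ioc (0:ℝ) T₀)).prod (volume.restrict (Ioc (0:ℝ) T₀))))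
    (hsqf : IntegrableOn (fun u => u * f u ^ 2) (Ioc 0 T₀)) :
    ((∫ u in Ioc (0:ℝ) T₀, ((∫ t in (0:ℝ)..u, f t) / (2 * Real.sqrt u) + Real.sqrt u * f u) ^ 2)
      ≤ (∫ u in Ioc (0:ℝ) T₀, f u * (∫ t in (0:ℝ)..u, f t) * Real.log (T₀ / u))
        + 2 * ∫ u in Ioc (0:ℝ) T₀, u * f u ^ 2)
    ∧ |∫ u in Ioc (0:ℝ) T₀, f u * (∫ t in (0:ℝ)..u, f t) * Real.log (T₀ / u)|
      ≤ ∫ p, |f p.1 * f p.2| * Real.log (T₀ / max p.1 p.2)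
          ∂((volume.restrict (Ioc (0:ℝ) T₀)).prod (volume.restrict (Ioc (0:ℝ) T₀))) := by
  set μ : Measure ℝ := volume.restrict (Ioc (0:ℝ) T₀) with hμdef
  set Λ : ℝ → ℝ := fun u => ∫ t in (0:ℝ)..u, f t with hΛdef
  -- a.e. membership facts
  have hmem : ∀ᵐ u ∂μ, u ∈ Ioc (0:ℝ) T₀ := ae_restrict_mem measurableSet_Ioc
  have hmemp : ∀ᵐ p ∂(μ.prod μ), p ∈ Ioc (0:ℝ) T₀ ×ˢ Ioc (0:ℝ) T₀ := by
    rw [hμdef, Measure.prod_restrict]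
    exact ae_restrict_mem (measurableSet_Ioc.prod measurableSet_Ioc)
  -- the 3D kernel
  set W : ℝ × (ℝ × ℝ) → ℝ :=
    fun q => (q.1)⁻¹ * ((Iio q.1).indicator f q.2.1 * (Iio q.1).indicator f q.2.2) with hWdef
  have hind1 : Measurable (fun q : ℝ × (ℝ × ℝ) => (Iio q.1).indicator f q.2.1) := by
    simp only [Set.indicator_apply, mem_Iio]
    exact Measurable.ite (measurableSet_lt measurable_snd.fst measurable_fst)
      (hf.comp measurable_snd.fst) measurable_const
  have hind2 : Measurable (fun q : ℝ × (ℝ × ℝ) => (Iio q.1).indicator f q.2.2) := by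
    simp only [Set.indicator_apply, mem_Iio]
    exact Measurable.ite (measurableSet_lt measurable_snd.snd measurable_fst)
      (hf.comp measurable_snd.snd) measurable_const
  have hWm : Measurable W := (measurable_fst.inv).mul (hind1.mul hind2)
  -- pointwise description of slices of W
  have hWslice : ∀ p : ℝ × ℝ, p ∈ Ioc (0:ℝ) T₀ ×ˢ Ioc (0:ℝ) T₀ → ∀ u : ℝ, u ∈ Ioc (0:ℝ) T₀ →
      W (u, p) = (Ioi (max p.1 p.2)).indicator (fun v => (f p.1 * f p.2) * (1/v)) u := by
    rintro p ⟨hp1, hp2⟩ u hu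
    by_cases hc : max p.1 p.2 < u
    · have h1 : p.1 < u := lt_of_le_of_lt (le_max_left _ _) hc
      have h2 : p.2 < u := lt_of_le_of_lt (le_max_right _ _) hc
      simp only [hWdef, Set.indicator_of_mem (mem_Iio.mpr h1), Set.indicator_of_mem (mem_Iio.mpr h2),
        Set.indicator_of_mem (mem_Ioi.mpr hc)]
      rw [one_div]; ring
    · have : p.1 ∉ Iio u ∨ p.2 ∉ Iio u := by
        rcases le_total p.2 p.1 with h | h
        · rw [max_eq_left h] at hc; exact Or.inl (fun hlt => hc (mem_Iio.mp hlt))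
        · rw [max_eq_right h] at hc; exact Or.inr (fun hlt => hc (mem_Iio.mp hlt))
      have hz : (Iio u).indicator f p.1 * (Iio u).indicator f p.2 = 0 := by
        rcases this with h | h
        · rw [Set.indicator_of_notMem h, zero_mul]
        · rw [Set.indicator_of_notMem h, mul_zero]
      simp only [hWdef, hz, mul_zero, Set.indicator_of_notMem (fun h => hc (mem_Ioi.mp h))]
  -- slice integrals of indicator * 1/v
  have hOioieq : ∀ m : ℝ, m ∈ Ioc (0:ℝ) T₀ → Ioi m ∩ Ioc (0:ℝ) T₀ = Ioc m T₀ := by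
    intro m hm; ext x
    constructor
    · rintro ⟨h1, _, h3⟩; exact ⟨h1, h3⟩
    · rintro ⟨h1, h2⟩; exact ⟨h1, lt_trans hm.1 h1, h2⟩
  have hmmem : ∀ p : ℝ × ℝ, p ∈ Ioc (0:ℝ) T₀ ×ˢ Ioc (0:ℝ) T₀ → max p.1 p.2 ∈ Ioc (0:ℝ) T₀ := by
    rintro p ⟨hp1, hp2⟩
    exact ⟨lt_max_of_lt_left hp1.1, max_le hp1.2 hp2.2⟩
  have hsliceint : ∀ (c : ℝ) (m : ℝ), m ∈ Ioc (0:ℝ) T₀ →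
      (Integrable ((Ioi m).indicator (fun v => c * (1/v))) μ ∧
       ∫ u, (Ioi m).indicator (fun v => c * (1/v)) u ∂μ = c * Real.log (T₀ / m)) := by
    intro c m hm
    have hint : IntegrableOn (fun v : ℝ => c * (1/v)) (Ioc m T₀) :=
      (integrableOn_one_div_Ioc hm.1).const_mul c
    constructor
    · rw [hμdef, integrable_indicator_iff measurableSet_Ioi, IntegrableOn,
        Measure.restrict_restrict measurableSet_Ioi, hOioieq m hm]
      exact hint
    · rw [integral_indicator measurableSet_Ioi, hμdef,
        Measure.restrict_restrict measurableSet_Ioi, hOioieq m hm, integral_const_mul,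
        integral_one_div_Ioc hm.1 hm.2]
  -- integrability of W on the triple product
  have hWint : Integrable W (μ.prod (μ.prod μ)) := by
    rw [integrable_prod_iff' hWm.aestronglyMeasurable]
    constructor
    · filter_upwards [hmemp] with p hp
      exact Integrable.congr (hsliceint (f p.1 * f p.2) _ (hmmem p hp)).1
        (by filter_upwards [hmem] with u hu; exact (hWslice p hp u hu).symm)
    · apply habs.congr
      filter_upwards [hmemp] with p hp
      have hcalc : ∀ᵐ u ∂μ, ‖W (u, p)‖
          = (Ioi (max p.1 p.2)).indicator (fun v => |f p.1 * f p.2| * (1/v)) u := by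
        filter_upwards [hmem] with u hu
        rw [hWslice p hp u hu]
        by_cases hc : u ∈ Ioi (max p.1 p.2)
        · have hu0 : (0:ℝ) ≤ 1/u := one_div_nonneg.mpr hu.1.le
          rw [Set.indicator_of_mem hc, Set.indicator_of_mem hc, Real.norm_eq_abs, abs_mul,
            abs_of_nonneg hu0]
        · rw [Set.indicator_of_notMem hc, Set.indicator_of_notMem hc, norm_zero]
      rw [integral_congr_ae hcalc, (hsliceint |f p.1 * f p.2| _ (hmmem p hp)).2]
  -- the symmetric kernel K
  set K : ℝ × ℝ → ℝ := fun p => f p.1 * f p.2 * Real.log (T₀ / max p.1 p.2) with hKdef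
  have hlognn : ∀ p : ℝ × ℝ, p ∈ Ioc (0:ℝ) T₀ ×ˢ Ioc (0:ℝ) T₀ →
      0 ≤ Real.log (T₀ / max p.1 p.2) := by
    intro p hp
    apply Real.log_nonneg
    rw [le_div_iff₀ (hmmem p hp).1]
    simpa using (hmmem p hp).2
  have ha : ∀ᵐ p ∂(μ.prod μ), (∫ u, W (u, p) ∂μ) = K p := by
    filter_upwards [hmemp] with p hp
    have h1 : ∀ᵐ u ∂μ, W (u, p)
        = (Ioi (max p.1 p.2)).indicator (fun v => (f p.1 * f p.2) * (1/v)) u := by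
      filter_upwards [hmem] with u hu; exact hWslice p hp u hu
    rw [integral_congr_ae h1, (hsliceint (f p.1 * f p.2) _ (hmmem p hp)).2, hKdef]
  have hb : ∀ᵐ u ∂μ, (∫ p, W (u, p) ∂(μ.prod μ)) = (∫ t in (0:ℝ)..u, f t)^2 / u := by
    filter_upwards [hmem] with u hu
    have h1 : (∫ p, W (u, p) ∂(μ.prod μ))
        = u⁻¹ * ((∫ r, (Iio u).indicator f r ∂μ) * (∫ r, (Iio u).indicator f r ∂μ)) := by
      rw [hWdef]
      simp only []
      rw [integral_const_mul, integral_prod_mul (f := (Iio u).indicator f) (g := (Iio u).indicator f)]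
    rw [h1, hμdef, indicator_integral_eq T₀ f hu, sq, inv_mul_eq_div]
  have hKeq : ∫ p, K p ∂(μ.prod μ) = ∫ u, (∫ t in (0:ℝ)..u, f t)^2 / u ∂μ :=
    calc ∫ p, K p ∂(μ.prod μ)
        = ∫ p, (∫ u, W (u, p) ∂μ) ∂(μ.prod μ) := (integral_congr_ae ha).symm
      _ = ∫ u, (∫ p, W (u, p) ∂(μ.prod μ)) ∂μ :=
          (integral_integral_swap (f := fun u p => W (u, p)) hWint).symm
      _ = _ := integral_congr_ae hb
  have hΛint : Integrable (fun u => (∫ t in (0:ℝ)..u, f t)^2 / u) μ :=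
    (hWint.integral_prod_left).congr hb
  -- the one-sided kernel V
  set V : ℝ × ℝ → ℝ := fun p => (f p.1 * Real.log (T₀ / p.1)) * (Iio p.1).indicator f p.2
    with hVdef
  have hVm : Measurable V := by
    apply Measurable.mul
    · exact (hf.comp measurable_fst).mul
        (Real.measurable_log.comp (measurable_const.div measurable_fst))
    · simp only [Set.indicator_apply, mem_Iio]
      exact Measurable.ite (measurableSet_lt measurable_snd measurable_fst)
        (hf.comp measurable_snd) measurable_const
  have hVbound : ∀ᵐ p ∂(μ.prod μ), ‖V p‖ ≤ |f p.1 * f p.2| * Real.log (T₀ / max p.1 p.2) := by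
    filter_upwards [hmemp] with p hp
    by_cases hc : p.2 < p.1
    · have hL : 0 ≤ Real.log (T₀ / p.1) := by
        apply Real.log_nonneg
        rw [le_div_iff₀ hp.1.1]
        simpa using hp.1.2
      rw [max_eq_left hc.le]
      apply le_of_eq
      simp only [hVdef, Set.indicator_of_mem (mem_Iio.mpr hc), Real.norm_eq_abs, abs_mul,
        abs_of_nonneg hL]
      ring
    · simp only [hVdef, Set.indicator_of_notMem (fun h => hc (mem_Iio.mp h)), mul_zero,
        norm_zero]
      exact mul_nonneg (abs_nonneg _) (hlognn p hp)
  have hVint : Integrable V (μ.prod μ) := habs.mono' hVm.aestronglyMeasurable hVbound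
  have hVeq : ∫ p, V p ∂(μ.prod μ)
      = ∫ u, f u * (∫ t in (0:ℝ)..u, f t) * Real.log (T₀ / u) ∂μ := by
    rw [integral_prod V hVint]
    apply integral_congr_ae
    filter_upwards [hmem] with u hu
    simp only [hVdef]
    rw [integral_const_mul, hμdef, indicator_integral_eq T₀ f hu]
    ring
  have hVswapint : Integrable (fun z : ℝ × ℝ => V z.swap) (μ.prod μ) := hVint.swap
  have hdiag : ∀ᵐ p ∂(μ.prod μ), p.1 ≠ p.2 := by
    rw [ae_iff]
    have hms : MeasurableSet {p : ℝ × ℝ | p.1 = p.2} :=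
      measurableSet_eq_fun measurable_fst measurable_snd
    have hz : (μ.prod μ) {p : ℝ × ℝ | p.1 = p.2} = 0 := by
      rw [Measure.prod_apply hms]
      have hfib : ∀ x : ℝ, μ (Prod.mk x ⁻¹' {p : ℝ × ℝ | p.1 = p.2}) = 0 := by
        intro x
        have hpre : Prod.mk x ⁻¹' {p : ℝ × ℝ | p.1 = p.2} = {x} := by
          ext y; simp [eq_comm]
        rw [hpre, hμdef, Measure.restrict_apply (measurableSet_singleton x)]
        exact measure_mono_null Set.inter_subset_left Real.volume_singleton
      simp [hfib]
    simpa only [ne_eq, not_not] using hz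
  have hdecomp : ∀ᵐ p ∂(μ.prod μ), K p = V p + V p.swap := by
    filter_upwards [hmemp, hdiag] with p hp hne
    rcases lt_or_gt_of_ne hne with h | h
    · simp only [hKdef, hVdef, Prod.fst_swap, Prod.snd_swap,
        Set.indicator_of_mem (mem_Iio.mpr h),
        Set.indicator_of_notMem (fun hh => absurd (mem_Iio.mp hh) (not_lt.mpr h.le)),
        max_eq_right h.le, mul_zero, zero_add]
      ring
    · simp only [hKdef, hVdef, Prod.fst_swap, Prod.snd_swap,
        Set.indicator_of_mem (mem_Iio.mpr h),
        Set.indicator_of_notMem (fun hh => absurd (mem_Iio.mp hh) (not_lt.mpr h.le)),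
        max_eq_left h.le, mul_zero, add_zero]
      ring
  have hK2V : ∫ p, K p ∂(μ.prod μ) = 2 * ∫ p, V p ∂(μ.prod μ) := by
    rw [integral_congr_ae hdecomp, integral_add hVint hVswapint, integral_prod_swap V]
    ring
  -- main pointwise bound and conclusion
  have hmono : (∫ u, ((∫ t in (0:ℝ)..u, f t) / (2 * Real.sqrt u) + Real.sqrt u * f u)^2 ∂μ)
      ≤ ∫ u, ((∫ t in (0:ℝ)..u, f t)^2 / u / 2 + 2 * (u * f u ^ 2)) ∂μ := by
    apply integral_mono_of_nonneg (Filter.Eventually.of_forall fun u => sq_nonneg _)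
      ((hΛint.div_const 2).add (hsqf.const_mul 2))
    filter_upwards [hmem] with u hu
    have hs : 0 < Real.sqrt u := Real.sqrt_pos.mpr hu.1
    have hs2 : Real.sqrt u ^ 2 = u := Real.sq_sqrt hu.1.le
    show ((∫ t in (0:ℝ)..u, f t) / (2 * Real.sqrt u) + Real.sqrt u * f u)^2
      ≤ (∫ t in (0:ℝ)..u, f t)^2 / u / 2 + 2 * (u * f u ^ 2)
    set a := ∫ t in (0:ℝ)..u, f t
    set b := f u
    set s := Real.sqrt u with hsdef
    rw [← hs2]
    have h1 : (a/(2*s) + s*b)^2 = a^2/(4*s^2) + a*b + s^2*b^2 := by field_simp; ring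
    have h2 : (a/(2*s) - s*b)^2 = a^2/(4*s^2) - a*b + s^2*b^2 := by field_simp; ring
    have h3 : a^2/(s^2)/2 = 2*(a^2/(4*s^2)) := by ring
    nlinarith [sq_nonneg (a/(2*s) - s*b)]
  have hrhs : ∫ u, ((∫ t in (0:ℝ)..u, f t)^2 / u / 2 + 2 * (u * f u ^ 2)) ∂μ
      = (∫ u, (∫ t in (0:ℝ)..u, f t)^2 / u ∂μ) / 2 + 2 * ∫ u, u * f u ^ 2 ∂μ := by
    rw [integral_add (hΛint.div_const 2) (hsqf.const_mul 2), integral_div, integral_const_mul]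
  have hfinal1 : (∫ u, (∫ t in (0:ℝ)..u, f t)^2 / u ∂μ) / 2
      = ∫ u, f u * (∫ t in (0:ℝ)..u, f t) * Real.log (T₀ / u) ∂μ := by
    rw [← hKeq, hK2V, ← hVeq]
    ring
  constructor
  · linarith [hmono, hrhs, hfinal1]
  · rw [← hVeq]
    have h1 : |∫ p, V p ∂(μ.prod μ)| ≤ ∫ p, ‖V p‖ ∂(μ.prod μ) := by
      rw [← Real.norm_eq_abs]
      exact norm_integral_le_integral_norm V
    exact le_trans h1 (integral_mono_ae hVint.norm habs hVbound)

/-- The market price of risk: `λ(s,T) = ∫₀^T η(s,u) du`. -/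
noncomputable def mpr (η : ℝ → ℝ → ℝ) (s T : ℝ) : ℝ := ∫ u in (0:ℝ)..T, η s u

/-- The integrand of the space-time Girsanov kernel:
`g(s,u) = λ(s,u)/(2√u) + √u·η(s,u)`. -/
noncomputable def gker (η : ℝ → ℝ → ℝ) (s u : ℝ) : ℝ :=
  mpr η s u / (2 * Real.sqrt u) + Real.sqrt u * η s u

/-- Under the stated integrability hypotheses on `η`,
`(1/2)∫∫ g(s,u)² du ds ≤ (1/2)∫∫ η(s,u) λ(s,u) log(T₀/u) du ds + ∫∫ u·η(s,u)² du ds`. -/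
theorem stmt2 (T₀ : ℝ) (hT₀ : 0 < T₀) (η : ℝ → ℝ → ℝ)
    (hmeas : Measurable (Function.uncurry η))
    (hL1 : ∀ᵐ s ∂(volume.restrict (Ioc (0:ℝ) T₀)), IntegrableOn (η s) (Ioc (0:ℝ) T₀))
    (hintabs : IntegrableOn
      (fun p : ℝ × ℝ × ℝ => |η p.1 p.2.1 * η p.1 p.2.2| * Real.log (T₀ / max p.2.1 p.2.2))
      (Ioc (0:ℝ) T₀ ×ˢ Ioc (0:ℝ) T₀ ×ˢ Ioc (0:ℝ) T₀))
    (hsq : IntegrableOn (fun p : ℝ × ℝ => p.2 * η p.1 p.2 ^ 2)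
      (Ioc (0:ℝ) T₀ ×ˢ Ioc (0:ℝ) T₀)) :
    (1 / 2) * ∫ s in Ioc (0:ℝ) T₀, ∫ u in Ioc (0:ℝ) T₀, (gker η s u) ^ 2
      ≤ (1 / 2) * (∫ s in Ioc (0:ℝ) T₀, ∫ u in Ioc (0:ℝ) T₀,
            η s u * mpr η s u * Real.log (T₀ / u))
        + ∫ s in Ioc (0:ℝ) T₀, ∫ u in Ioc (0:ℝ) T₀, u * η s u ^ 2 := by
  set μ : Measure ℝ := volume.restrict (Ioc (0:ℝ) T₀) with hμdef
  have hη : ∀ s : ℝ, Measurable (η s) := fun s => hmeas.comp measurable_prodMk_left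
  have hintabs' : Integrable
      (fun p : ℝ × ℝ × ℝ => |η p.1 p.2.1 * η p.1 p.2.2| * Real.log (T₀ / max p.2.1 p.2.2))
      (μ.prod (μ.prod μ)) := by
    have h1 := hintabs
    rw [IntegrableOn, Measure.volume_eq_prod, ← Measure.prod_restrict,
      Measure.volume_eq_prod, ← Measure.prod_restrict] at h1
    exact h1
  have hsq' : Integrable (fun p : ℝ × ℝ => p.2 * η p.1 p.2 ^ 2) (μ.prod μ) := by
    have h1 := hsq
    rw [IntegrableOn, Measure.volume_eq_prod, ← Measure.prod_restrict] at h1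
    exact h1
  have habs_ae : ∀ᵐ s ∂μ, Integrable
      (fun p : ℝ × ℝ => |η s p.1 * η s p.2| * Real.log (T₀ / max p.1 p.2)) (μ.prod μ) :=
    hintabs'.prod_right_ae
  have hsq_ae : ∀ᵐ s ∂μ, Integrable (fun u => u * η s u ^ 2) μ := hsq'.prod_right_ae
  have key_ae : ∀ᵐ s ∂μ,
      ((∫ u, (gker η s u) ^ 2 ∂μ)
        ≤ (∫ u, η s u * mpr η s u * Real.log (T₀ / u) ∂μ) + 2 * ∫ u, u * η s u ^ 2 ∂μ)
      ∧ |∫ u, η s u * mpr η s u * Real.log (T₀ / u) ∂μ|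
        ≤ ∫ p, |η s p.1 * η s p.2| * Real.log (T₀ / max p.1 p.2) ∂(μ.prod μ) := by
    filter_upwards [hL1, habs_ae, hsq_ae] with s h1 h2 h3
    have h := per_f T₀ hT₀ (η s) (hη s) h1 h2 h3
    simpa only [gker, mpr] using h
  set G₁ : ℝ → ℝ := fun s => ∫ u, η s u * mpr η s u * Real.log (T₀ / u) ∂μ with hG₁def
  have hWoutSM : StronglyMeasurable (fun q : ℝ × ℝ =>
      η q.1 q.2 * (∫ t, (Iio q.2).indicator (η q.1) t ∂μ) * Real.log (T₀ / q.2)) := by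
    apply StronglyMeasurable.mul
    apply StronglyMeasurable.mul
    · exact hmeas.stronglyMeasurable
    · have hI : Measurable (fun z : (ℝ × ℝ) × ℝ => (Iio z.1.2).indicator (η z.1.1) z.2) := by
        simp only [Set.indicator_apply, mem_Iio]
        exact Measurable.ite (measurableSet_lt measurable_snd measurable_fst.snd)
          (hmeas.comp (measurable_fst.fst.prodMk measurable_snd)) measurable_const
      exact hI.stronglyMeasurable.integral_prod_right'
    · exact (Real.measurable_log.comp (measurable_const.div measurable_snd)).stronglyMeasurable
  have hG₁eq : G₁ = fun s => ∫ u, η s u * (∫ t, (Iio u).indicator (η s) t ∂μ)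
      * Real.log (T₀ / u) ∂μ := by
    funext s
    apply integral_congr_ae
    have hmem : ∀ᵐ u ∂μ, u ∈ Ioc (0:ℝ) T₀ := ae_restrict_mem measurableSet_Ioc
    filter_upwards [hmem] with u hu
    simp only [mpr]
    rw [hμdef, indicator_integral_eq T₀ (η s) hu]
  have hG₁SM : AEStronglyMeasurable G₁ μ := by
    rw [hG₁eq]
    exact hWoutSM.integral_prod_right'.aestronglyMeasurable
  have hHint : Integrable (fun s => ∫ p,
      |η s p.1 * η s p.2| * Real.log (T₀ / max p.1 p.2) ∂(μ.prod μ)) μ :=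
    hintabs'.integral_prod_left
  have hG₁int : Integrable G₁ μ := by
    apply Integrable.mono' hHint hG₁SM
    filter_upwards [key_ae] with s hs
    rw [Real.norm_eq_abs]
    exact hs.2
  have hG₂int : Integrable (fun s => ∫ u, u * η s u ^ 2 ∂μ) μ := hsq'.integral_prod_left
  have hbig : (∫ s, ∫ u, (gker η s u) ^ 2 ∂μ ∂μ)
      ≤ ∫ s, (G₁ s + 2 * ∫ u, u * η s u ^ 2 ∂μ) ∂μ := by
    apply integral_mono_of_nonneg
    · exact Filter.Eventually.of_forall fun s => integral_nonneg fun u => sq_nonneg _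
    · exact hG₁int.add (hG₂int.const_mul 2)
    · filter_upwards [key_ae] with s hs
      exact hs.1
  rw [integral_add hG₁int (hG₂int.const_mul 2), integral_const_mul] at hbig
  linarith
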